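/- Let R be a standard graded polynomial ring over a Noetherian ring R_0, m = R_+, and let D• be a bounded-below graded complex of finitely generated graded R-modules (D_i = 0 for i < 0). Suppose the homology modules H_i(D•) for i > 0 all have cohomological dimension (with respect to m) at most 1. Then for every p ≥ 0, a_p(H_0(D•)) ≤ max over i ≥ 0 of a_{p+i}(D_i). -/

import Mathlib

open Finset

section PaperRegularity

/-! ## Graded rings, graded modules, and a concrete (Koszul/Čech) model of graded local
cohomology, used to express the invariants `a_i(M)` and `reg(M)` of Castelnuovo–Mumford
regularity theory. -/

/-- Degrees, with `−∞` (for vanishing modules) and `+∞`. -/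
abbrev Deg : Type := WithBot (WithTop ℤ)

/-- The canonical inclusion of `ℤ` into `Deg`. -/
def Deg.of (j : ℤ) : Deg := ((j : WithTop ℤ) : Deg)

variable {S : Type} [CommRing S]

/-- `𝒜` is a (ℤ-indexed, nonnegatively supported) standard grading on the ring `S`:
`S = ⊕ 𝒜_i`, `1 ∈ 𝒜_0`, `𝒜_i · 𝒜_j ⊆ 𝒜_{i+j}`, `𝒜_i = 0` for `i < 0`, and `S` is
generated in degree one: `𝒜_{i+1} = 𝒜_1 · 𝒜_i`. -/
structure IsStdGraded (𝒜 : ℤ → AddSubgroup S) : Prop where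
  internal : DirectSum.IsInternal 𝒜
  one_mem : (1 : S) ∈ 𝒜 0
  mul_mem : ∀ {i j : ℤ} {a b : S}, a ∈ 𝒜 i → b ∈ 𝒜 j → a * b ∈ 𝒜 (i + j)
  bot_of_neg : ∀ i < (0 : ℤ), 𝒜 i = ⊥
  gen_one : ∀ i : ℤ, 0 ≤ i → ∀ a ∈ 𝒜 (i + 1),
    a ∈ AddSubgroup.closure {y : S | ∃ s ∈ 𝒜 1, ∃ b ∈ 𝒜 i, y = s * b}

/-- `S` is a standard graded ring *over* `R₀` (via the algebra structure):
the degree-zero part is exactly the image of `R₀`. -/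
def GradedOver (𝒜 : ℤ → AddSubgroup S) (R₀ : Type) [CommRing R₀] [Algebra R₀ S] : Prop :=
  Function.Injective (algebraMap R₀ S) ∧ (𝒜 0 : Set S) = Set.range (algebraMap R₀ S)

/-- `ℳ` is a grading on the `S`-module `M`, compatible with the grading `𝒜` of `S`. -/
structure IsGradedMod (𝒜 : ℤ → AddSubgroup S) {M : Type} [AddCommGroup M] [Module S M]
    (ℳ : ℤ → AddSubgroup M) : Prop where
  internal : DirectSum.IsInternal ℳ
  smul_mem : ∀ {i j : ℤ} {s : S} {m : M}, s ∈ 𝒜 i → m ∈ ℳ j → s • m ∈ ℳ (i + j)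

/-- `x : Fin n → S` is a family of degree-one elements generating `𝒜 1` (hence generating
the irrelevant ideal `S₊` up to radical). -/
def GensDegOne (𝒜 : ℤ → AddSubgroup S) {n : ℕ} (x : Fin n → S) : Prop :=
  (∀ i, x i ∈ 𝒜 1) ∧
    ∀ s ∈ 𝒜 1, s ∈ AddSubgroup.closure {y : S | ∃ r ∈ 𝒜 0, ∃ i, y = r * x i}

/-- The irrelevant ideal `S₊ = ⊕_{i>0} 𝒜_i` of a graded ring. -/
def sPlus (𝒜 : ℤ → AddSubgroup S) : Ideal S :=
  Ideal.span {s : S | ∃ i : ℤ, 0 < i ∧ s ∈ 𝒜 i}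

/-- The induced grading on a quotient module `M ⧸ P` (images of the graded pieces). -/
def qmPiece {M : Type} [AddCommGroup M] [Module S M] (P : Submodule S M)
    (ℳ : ℤ → AddSubgroup M) (j : ℤ) : AddSubgroup (M ⧸ P) :=
  AddSubgroup.map (P.mkQ).toAddMonoidHom (ℳ j)

section Koszul

variable {M : Type} [AddCommGroup M] [Module S M] {n : ℕ}

/-- Cochains of the (exponent `t`) Koszul cocomplex on `x_1^t, …, x_n^t` with values in `M`. -/
abbrev KCochain (M : Type) (n i : ℕ) : Type := {T : Finset (Fin n) // T.card = i} → M

/-- The Koszul codifferential (for the sequence `x_1^t, …, x_n^t`). -/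
noncomputable def kd (x : Fin n → S) (t i : ℕ) (z : KCochain M n i) : KCochain M n (i + 1) :=
  fun T => ∑ s ∈ T.1.attach,
    ((-1 : ℤ) ^ ((T.1.filter (fun a => a < s.1)).card)) •
      ((x s.1 ^ t) • z ⟨T.1.erase s.1, by
        rw [Finset.card_erase_of_mem s.2, T.2]; rfl⟩)

/-- The transition map from the exponent `t` Koszul cocomplex to the exponent `t + u` one. -/
noncomputable def kpush (x : Fin n → S) (u i : ℕ) (z : KCochain M n i) : KCochain M n i :=
  fun T => (∏ s ∈ T.1, x s ^ u) • z T

/-- `z` is a coboundary in the exponent `t` Koszul cocomplex. -/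
def kIsCobound (x : Fin n → S) (t : ℕ) : ∀ i, KCochain M n i → Prop
  | 0, z => z = 0
  | i + 1, z => ∃ w : KCochain M n i, kd x t i w = z

/-- `z` lies in the internal degree `j` strand of the exponent `t` Koszul cocomplex
(in cohomological degree `i`), for the grading `ℳ` of `M`. -/
def kStrand (ℳ : ℤ → AddSubgroup M) (t i : ℕ) (j : ℤ) (z : KCochain M n i) : Prop :=
  ∀ T, z T ∈ ℳ (j + (t * i : ℕ))

/-- Nonvanishing of the degree `j` part of the `i`-th graded local cohomology module
`H^i_{S₊}(M)_j`, computed as the direct limit over `t` of the Koszul cohomologies of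
`x_1^t, …, x_n^t`: there is a degree `j` cocycle whose class survives in the colimit. -/
def lcNZ (x : Fin n → S) (ℳ : ℤ → AddSubgroup M) (i : ℕ) (j : ℤ) : Prop :=
  ∃ (t : ℕ) (z : KCochain M n i), kStrand ℳ t i j z ∧ kd x t i z = 0 ∧
    ∀ u : ℕ, ¬ kIsCobound x (t + u) i (kpush x u i z)

/-- `a_i(M)`: the top degree of the `i`-th local cohomology of `M` (`⊥` if it vanishes). -/
noncomputable def aVal (x : Fin n → S) (ℳ : ℤ → AddSubgroup M) (i : ℕ) : Deg :=
  sSup {d : Deg | ∃ j : ℤ, lcNZ x ℳ i j ∧ d = Deg.of j}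

/-- The Castelnuovo–Mumford regularity `reg M = max_i (a_i(M) + i)`. -/
noncomputable def regVal (x : Fin n → S) (ℳ : ℤ → AddSubgroup M) : Deg :=
  sSup {d : Deg | ∃ (i : ℕ) (j : ℤ), lcNZ x ℳ i j ∧ d = Deg.of (j + i)}

end Koszul

/-- A (bounded-below, homologically indexed) complex of finitely generated graded free
`S`-modules `F_i = ⊕_{a : Fin (r i)} S(-deg i a)`, recorded via its matrices: the entry
`mat i a b ∈ S` is the coefficient of the `b`-th basis vector of `F_i` in the image of the
`a`-th basis vector of `F_{i+1}`; entries are homogeneous of the appropriate degrees. -/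
structure GFC (𝒜 : ℤ → AddSubgroup S) where
  r : ℕ → ℕ
  deg : ∀ i, Fin (r i) → ℤ
  mat : ∀ i, Fin (r (i + 1)) → Fin (r i) → S
  mat_mem : ∀ i a b, mat i a b ∈ 𝒜 (deg (i + 1) a - deg i b)
  comp_eq_zero : ∀ i (a : Fin (r (i + 2))) (c : Fin (r i)),
    ∑ b, mat i b c * mat (i + 1) a b = 0

/-- A minimal graded free resolution of the graded `S`-module `M` (with grading `ℳ`):
a graded free complex `F_•` together with an augmentation `F_0 → M` which is surjective,
exact, and minimal (all entries of the differentials lie in the maximal graded ideal;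
`m0` is the set of degree-zero elements lying in the maximal ideal of `S_0`). -/
structure MGFR (𝒜 : ℤ → AddSubgroup S) {M : Type} [AddCommGroup M] [Module S M]
    (ℳ : ℤ → AddSubgroup M) (m0 : Set S) extends GFC 𝒜 where
  augm : Fin (r 0) → M
  augm_mem : ∀ a, augm a ∈ ℳ (deg 0 a)
  augm_surj : ∀ m : M, ∃ z : Fin (r 0) → S, ∑ a, z a • augm a = m
  exact_zero : ∀ z : Fin (r 0) → S, (∑ a, z a • augm a = 0) ↔
    ∃ w : Fin (r 1) → S, (fun b => ∑ a, mat 0 a b * w a) = z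
  exact_succ : ∀ i (z : Fin (r (i + 1)) → S),
    ((fun b => ∑ a, mat i a b * z a) = (0 : Fin (r i) → S)) ↔
      ∃ w : Fin (r (i + 2)) → S, (fun c => ∑ a, mat (i + 1) a c * w a) = z
  minimal : ∀ i a b, deg (i + 1) a = deg i b → mat i a b ∈ m0

namespace GFC

variable {𝒜 : ℤ → AddSubgroup S} (F : GFC 𝒜)
variable (N : Type) [AddCommGroup N] [Module S N]

/-- The complex `F_• ⊗_S N`, in homological degree `i`. -/
noncomputable def tmap (i : ℕ) : ((Fin (F.r (i + 1)) → N) →ₗ[S] (Fin (F.r i) → N)) where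
  toFun z := fun b => ∑ a, F.mat i a b • z a
  map_add' y z := by
    funext b
    simp only [Pi.add_apply, smul_add]
    exact Finset.sum_add_distrib
  map_smul' s z := by
    funext b
    simp only [Pi.smul_apply, RingHom.id_apply]
    rw [Finset.smul_sum]
    exact Finset.sum_congr rfl fun a _ => smul_comm (F.mat i a b) s (z a)

/-- Cycles of the complex `F_• ⊗_S N`. -/
noncomputable def cyc : ∀ i : ℕ, Submodule S (Fin (F.r i) → N)
  | 0 => ⊤
  | i + 1 => LinearMap.ker (F.tmap N i)

/-- Boundaries of the complex `F_• ⊗_S N`. -/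
noncomputable def bdry (i : ℕ) : Submodule S (Fin (F.r i) → N) :=
  LinearMap.range (F.tmap N i)

/-- The homology `H_i(F_• ⊗_S N)` (e.g. `Tor_i^S(M, N)` when `F` is a resolution of `M`). -/
noncomputable def H (i : ℕ) : Type :=
  (F.cyc N i) ⧸ (Submodule.comap (F.cyc N i).subtype (F.bdry N i))

noncomputable instance (i : ℕ) : AddCommGroup (F.H N i) :=
  inferInstanceAs (AddCommGroup ((F.cyc N i) ⧸ (Submodule.comap (F.cyc N i).subtype (F.bdry N i))))

noncomputable instance (i : ℕ) : Module S (F.H N i) :=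
  inferInstanceAs (Module S ((F.cyc N i) ⧸ (Submodule.comap (F.cyc N i).subtype (F.bdry N i))))

/-- The internal degree `j` part of `F_i ⊗_S N`, for a grading `𝒩` of `N`. -/
def fpiece (𝒩 : ℤ → AddSubgroup N) (i : ℕ) (j : ℤ) : AddSubgroup (Fin (F.r i) → N) :=
  AddSubgroup.pi Set.univ (fun a => 𝒩 (j - F.deg i a))

/-- The induced grading on the homology `H_i(F_• ⊗_S N)`. -/
noncomputable def Hpiece (𝒩 : ℤ → AddSubgroup N) (i : ℕ) (j : ℤ) : AddSubgroup (F.H N i) :=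
  AddSubgroup.map
    ((Submodule.mkQ (Submodule.comap (F.cyc N i).subtype (F.bdry N i))).toAddMonoidHom)
    (AddSubgroup.comap ((F.cyc N i).subtype).toAddMonoidHom (F.fpiece N 𝒩 i j))

/-- Nonvanishing of the degree `j` part of `H_i(F_• ⊗_S N)` (e.g. of `Tor_i^S(M, N)_j`). -/
noncomputable def HNZ (𝒩 : ℤ → AddSubgroup N) (i : ℕ) (j : ℤ) : Prop :=
  F.Hpiece N 𝒩 i j ≠ ⊥

end GFC

/-- The dimension of the support of an `S`-module. -/
noncomputable def mdim (S : Type) [CommRing S] (X : Type) [AddCommGroup X] [Module S X] :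
    WithBot (WithTop ℕ) :=
  ringKrullDim (S ⧸ Module.annihilator S X)

end PaperRegularity

section GradedComplexes

variable {S : Type} [CommRing S]

/-- A (bounded-below, homologically indexed) complex of graded `S`-modules, with underlying
modules `C i`, gradings `piece i`, and differentials `δ i : C (i+1) → C i`. -/
structure GradedComplexOn (𝒜 : ℤ → AddSubgroup S) (C : ℕ → Type)
    [∀ i, AddCommGroup (C i)] [∀ i, Module S (C i)] where
  piece : ∀ i, ℤ → AddSubgroup (C i)
  graded : ∀ i, IsGradedMod 𝒜 (piece i)
  δ : ∀ i, C (i + 1) →ₗ[S] C i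
  δδ : ∀ i z, δ i (δ (i + 1) z) = 0
  δ_graded : ∀ i (j : ℤ) z, z ∈ piece (i + 1) j → δ i z ∈ piece i j

namespace GradedComplexOn

variable {𝒜 : ℤ → AddSubgroup S} {C : ℕ → Type}
  [∀ i, AddCommGroup (C i)] [∀ i, Module S (C i)] (D : GradedComplexOn 𝒜 C)

/-- Cycles of the complex. -/
noncomputable def cyc : ∀ i, Submodule S (C i)
  | 0 => ⊤
  | i + 1 => LinearMap.ker (D.δ i)

/-- Boundaries of the complex. -/
noncomputable def bdry (i : ℕ) : Submodule S (C i) := LinearMap.range (D.δ i)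

/-- The homology `H_i` of the complex. -/
noncomputable def H (i : ℕ) : Type :=
  (D.cyc i) ⧸ (Submodule.comap (D.cyc i).subtype (D.bdry i))

noncomputable instance (i : ℕ) : AddCommGroup (D.H i) :=
  inferInstanceAs (AddCommGroup ((D.cyc i) ⧸ (Submodule.comap (D.cyc i).subtype (D.bdry i))))

noncomputable instance (i : ℕ) : Module S (D.H i) :=
  inferInstanceAs (Module S ((D.cyc i) ⧸ (Submodule.comap (D.cyc i).subtype (D.bdry i))))

/-- The induced grading on the homology `H_i`. -/
noncomputable def Hpiece (i : ℕ) (j : ℤ) : AddSubgroup (D.H i) :=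
  AddSubgroup.map
    ((Submodule.mkQ (Submodule.comap (D.cyc i).subtype (D.bdry i))).toAddMonoidHom)
    (AddSubgroup.comap ((D.cyc i).subtype).toAddMonoidHom (D.piece i j))

end GradedComplexOn

end GradedComplexes

/-- The standard grading of the polynomial ring `R₀[X_1, …, X_N]`, extended by zero to
negative degrees. -/
noncomputable def polyGrading (R₀ : Type) [CommRing R₀] (N : ℕ) :
    ℤ → AddSubgroup (MvPolynomial (Fin N) R₀) := fun j =>
  if 0 ≤ j then (MvPolynomial.homogeneousSubmodule (Fin N) R₀ j.toNat).toAddSubgroup else ⊥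

namespace Lem35

open Finset

section Koszul
variable {S : Type} [CommRing S]
variable {M : Type} [AddCommGroup M] [Module S M]
variable {M' : Type} [AddCommGroup M'] [Module S M']
variable {n : ℕ}

/-- Totalization of a Koszul cochain to all finsets. -/
noncomputable def ktot {i : ℕ} (z : KCochain M n i) : Finset (Fin n) → M :=
  fun U => if h : U.card = i then z ⟨U, h⟩ else 0

theorem ktot_apply {i : ℕ} (z : KCochain M n i) (U : Finset (Fin n)) (h : U.card = i) :
    ktot z U = z ⟨U, h⟩ := dif_pos h

/-- The Koszul sign. -/
def sgn (U : Finset (Fin n)) (s : Fin n) : ℤ := (-1 : ℤ) ^ ((U.filter (fun a => a < s)).card)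

theorem kd_eq (x : Fin n → S) (t i : ℕ) (z : KCochain M n i)
    (T : {T : Finset (Fin n) // T.card = i + 1}) :
    kd x t i z T = ∑ s ∈ T.1, sgn T.1 s • (x s ^ t • ktot z (T.1.erase s)) := by
  rw [kd, ← Finset.sum_attach T.1 (fun s => sgn T.1 s • (x s ^ t • ktot z (T.1.erase s)))]
  refine Finset.sum_congr rfl fun s _ => ?_
  rw [ktot_apply z _ (by rw [Finset.card_erase_of_mem s.2, T.2]; rfl)]
  rfl

theorem sgn_erase_of_lt {T : Finset (Fin n)} {s s' : Fin n} (h : s' < s) :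
    sgn (T.erase s) s' = sgn T s' := by
  unfold sgn
  rw [Finset.filter_erase, Finset.erase_eq_of_notMem]
  simp only [Finset.mem_filter, not_and]
  exact fun _ => asymm h

theorem sgn_erase_of_gt {T : Finset (Fin n)} {s s' : Fin n} (hs' : s' ∈ T) (h : s' < s) :
    ((sgn T s) * (-1) = sgn (T.erase s') s) := by
  unfold sgn
  rw [Finset.filter_erase, Finset.card_erase_of_mem (by simp [hs', h])]
  have hpos : 0 < (T.filter (fun a => a < s)).card :=
    Finset.card_pos.mpr ⟨s', by simp [hs', h]⟩
  obtain ⟨k, hk⟩ : ∃ k, (T.filter (fun a => a < s)).card = k + 1 :=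
    ⟨_, (Nat.succ_pred_eq_of_pos hpos).symm⟩
  rw [hk]
  simp [pow_succ]

theorem kd_kd (x : Fin n → S) (t i : ℕ) (z : KCochain M n i) :
    kd x t (i + 1) (kd x t i z) = 0 := by
  funext T
  rw [kd_eq]
  have hstep : ∀ s ∈ T.1, sgn T.1 s • (x s ^ t • ktot (kd x t i z) (T.1.erase s)) =
      ∑ s' ∈ T.1.erase s, (sgn T.1 s * sgn (T.1.erase s) s') •
        ((x s ^ t * x s' ^ t) • ktot z ((T.1.erase s).erase s')) := by
    intro s hs
    rw [ktot_apply _ _ (by rw [Finset.card_erase_of_mem hs, T.2]; rfl), kd_eq, Finset.smul_sum,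
      Finset.smul_sum]
    refine Finset.sum_congr rfl fun s' _ => ?_
    rw [smul_comm (x s ^ t), smul_smul (sgn T.1 s), smul_smul (x s ^ t)]
  rw [Finset.sum_congr rfl hstep, Finset.sum_sigma']
  refine Finset.sum_involution
    (fun (p : Σ _ : Fin n, Fin n) (_ : p ∈ T.1.sigma (fun s => T.1.erase s)) =>
      (⟨p.2, p.1⟩ : Σ _ : Fin n, Fin n)) ?_ ?_ ?_ ?_
  · -- cancellation
    rintro ⟨s, s'⟩ hp
    simp only [Finset.mem_sigma, Finset.mem_erase] at hp
    obtain ⟨hsT, hne, hs2T⟩ := hp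
    have herase : (T.1.erase s).erase s' = (T.1.erase s').erase s := Finset.erase_right_comm
    have hmul : x s ^ t * x s' ^ t = x s' ^ t * x s ^ t := mul_comm _ _
    have hsgn : sgn T.1 s * sgn (T.1.erase s) s' + sgn T.1 s' * sgn (T.1.erase s') s = 0 := by
      rcases lt_or_gt_of_ne hne with hlt | hlt
      · -- s' < s
        rw [sgn_erase_of_lt hlt, ← sgn_erase_of_gt hs2T hlt]; ring
      · -- s < s'
        rw [sgn_erase_of_lt hlt, ← sgn_erase_of_gt hsT hlt]; ring
    show _ + _ = (0 : M)
    rw [herase, hmul, ← add_smul, hsgn, zero_smul]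
  · rintro ⟨s, s'⟩ hp hfne h
    simp only [Finset.mem_sigma, Finset.mem_erase] at hp
    exact hp.2.1 (congrArg Sigma.fst h)
  · rintro ⟨s, s'⟩ hp
    simp only [Finset.mem_sigma, Finset.mem_erase] at hp ⊢
    exact ⟨hp.2.2, Ne.symm hp.2.1, hp.1⟩
  · rintro ⟨s, s'⟩ hp
    rfl

end Koszul
section Koszul2
variable {S : Type} [CommRing S]
variable {M : Type} [AddCommGroup M] [Module S M]
variable {M' : Type} [AddCommGroup M'] [Module S M']
variable {n : ℕ}

theorem ktot_kpush (x : Fin n → S) (u i : ℕ) (z : KCochain M n i) (U : Finset (Fin n))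
    (h : U.card = i) :
    ktot (kpush x u i z) U = (∏ a ∈ U, x a ^ u) • ktot z U := by
  rw [ktot_apply _ _ h, ktot_apply _ _ h]; rfl

theorem kpush_apply (x : Fin n → S) (u i : ℕ) (z : KCochain M n i)
    (T : {T : Finset (Fin n) // T.card = i}) :
    kpush x u i z T = (∏ s ∈ T.1, x s ^ u) • z T := rfl

theorem kpush_kpush (x : Fin n → S) (u u' i : ℕ) (z : KCochain M n i) :
    kpush x u' i (kpush x u i z) = kpush x (u + u') i z := by
  funext T
  rw [kpush_apply, kpush_apply, kpush_apply, smul_smul, ← Finset.prod_mul_distrib]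
  congr 1
  exact Finset.prod_congr rfl fun s _ => by rw [← pow_add, Nat.add_comm u' u]

theorem kd_kpush (x : Fin n → S) (t u i : ℕ) (z : KCochain M n i) :
    kd x (t + u) i (kpush x u i z) = kpush x u (i + 1) (kd x t i z) := by
  funext T
  rw [kd_eq, kpush_apply, kd_eq, Finset.smul_sum]
  refine Finset.sum_congr rfl fun s hs => ?_
  rw [ktot_kpush x u i z _ (by rw [Finset.card_erase_of_mem hs, T.2]; rfl)]
  rw [smul_comm (∏ s ∈ T.1, x s ^ u) (sgn T.1 s), smul_smul, smul_smul]
  congr 2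
  rw [← Finset.mul_prod_erase (T.1) (fun a => x a ^ u) hs, pow_add]
  ring

/-- Push a cochain forward along a linear map. -/
def cmap (f : M →ₗ[S] M') {i : ℕ} (z : KCochain M n i) : KCochain M' n i := fun T => f (z T)

theorem cmap_add (f : M →ₗ[S] M') {i : ℕ} (y z : KCochain M n i) :
    cmap f (y + z) = cmap f y + cmap f z := by
  funext T; exact f.map_add _ _

theorem cmap_sub (f : M →ₗ[S] M') {i : ℕ} (y z : KCochain M n i) :
    cmap f (y - z) = cmap f y - cmap f z := by
  funext T; exact f.map_sub _ _

theorem cmap_zero (f : M →ₗ[S] M') {i : ℕ} : cmap f (0 : KCochain M n i) = 0 := by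
  funext T; exact f.map_zero

theorem kd_cmap (f : M →ₗ[S] M') (x : Fin n → S) (t i : ℕ) (z : KCochain M n i) :
    kd x t i (cmap f z) = cmap f (kd x t i z) := by
  funext T
  show _ = f (kd x t i z T)
  rw [kd, kd, map_sum]
  refine Finset.sum_congr rfl fun s _ => ?_
  rw [map_zsmul, map_smul]
  rfl

theorem kpush_cmap (f : M →ₗ[S] M') (x : Fin n → S) (u i : ℕ) (z : KCochain M n i) :
    kpush x u i (cmap f z) = cmap f (kpush x u i z) := by
  funext T
  show _ = f (kpush x u i z T)
  rw [kpush_apply, kpush_apply, map_smul]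
  rfl

end Koszul2

section CSys

variable {S : Type} [CommRing S]

/-- An abstract "graded component extraction" system for a graded module. -/
structure CompSys (𝒜 : ℤ → AddSubgroup S) (M : Type) [AddCommGroup M] [Module S M]
    (ℳ : ℤ → AddSubgroup M) : Type where
  comp : ℤ → M → M
  comp_add : ∀ k a b, comp k (a + b) = comp k a + comp k b
  comp_mem : ∀ k m, comp k m ∈ ℳ k
  comp_of_mem : ∀ {k : ℤ} {m : M}, m ∈ ℳ k → comp k m = m
  comp_smul : ∀ {d : ℤ} {s : S} (k : ℤ) (m : M), s ∈ 𝒜 d → comp k (s • m) = s • comp (k - d) m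
  smul_piece : ∀ {d i : ℤ} {s : S} {m : M}, s ∈ 𝒜 d → m ∈ ℳ i → s • m ∈ ℳ (d + i)

namespace CompSys

variable {𝒜 : ℤ → AddSubgroup S} {M : Type} [AddCommGroup M] [Module S M]
  {ℳ : ℤ → AddSubgroup M} (c : CompSys 𝒜 M ℳ)

/-- `comp` bundled as an additive map. -/
def compHom (k : ℤ) : M →+ M := AddMonoidHom.mk' (c.comp k) (c.comp_add k)

theorem compHom_apply (k : ℤ) (m : M) : c.compHom k m = c.comp k m := rfl

theorem comp_zero (k : ℤ) : c.comp k (0 : M) = 0 := (c.compHom k).map_zero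

theorem comp_zsmul (k : ℤ) (a : ℤ) (m : M) : c.comp k (a • m) = a • c.comp k m :=
  (c.compHom k).map_zsmul a m

variable {n : ℕ}

/-- Componentwise graded-component extraction on cochains. -/
def scomp (k : ℤ) {i : ℕ} (z : KCochain M n i) : KCochain M n i := fun T => c.comp k (z T)

theorem scomp_add (k : ℤ) {i : ℕ} (y z : KCochain M n i) :
    c.scomp k (y + z) = c.scomp k y + c.scomp k z := by
  funext T; exact c.comp_add _ _ _

theorem scomp_zero (k : ℤ) {i : ℕ} : c.scomp k (0 : KCochain M n i) = 0 := by
  funext T; exact c.comp_zero _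

end CompSys

end CSys

section Strand
variable {S : Type} [CommRing S] {𝒜 : ℤ → AddSubgroup S}
variable {M : Type} [AddCommGroup M] [Module S M] {ℳ : ℤ → AddSubgroup M}
variable {M' : Type} [AddCommGroup M'] [Module S M'] {ℳ' : ℤ → AddSubgroup M'}
variable {n : ℕ} {x : Fin n → S}

/-- The ring-side facts we need: `1` in degree `0`, multiplicativity, `x s` in degree `1`. -/
def RingGr (𝒜 : ℤ → AddSubgroup S) (x : Fin n → S) : Prop :=
  (1 : S) ∈ 𝒜 0 ∧ (∀ {a b : ℤ} {r r' : S}, r ∈ 𝒜 a → r' ∈ 𝒜 b → r * r' ∈ 𝒜 (a + b)) ∧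
    (∀ s, x s ∈ 𝒜 1)

theorem RingGr.pow_mem (h : RingGr 𝒜 x) (s : Fin n) (u : ℕ) : x s ^ u ∈ 𝒜 (u : ℤ) := by
  induction u with
  | zero => simpa using h.1
  | succ u ih =>
      have h2 := h.2.1 ih (h.2.2 s)
      rw [← pow_succ] at h2
      have he : ((u + 1 : ℕ) : ℤ) = (u : ℤ) + 1 := by push_cast; ring
      rw [he]
      exact h2

theorem RingGr.prod_mem (h : RingGr 𝒜 x) (u : ℕ) (U : Finset (Fin n)) :
    (∏ s ∈ U, x s ^ u) ∈ 𝒜 ((u * U.card : ℕ) : ℤ) := by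
  classical
  induction U using Finset.induction_on with
  | empty => simpa using h.1
  | insert a U' ha ih =>
      rw [Finset.prod_insert ha]
      have h2 := h.2.1 (h.pow_mem a u) ih
      have he : ((u * (insert a U').card : ℕ) : ℤ) = (u : ℤ) + ((u * U'.card : ℕ) : ℤ) := by
        rw [Finset.card_insert_of_notMem ha]; push_cast; ring
      rw [he]
      exact h2

namespace CompSys

variable (c : CompSys 𝒜 M ℳ) (c' : CompSys 𝒜 M' ℳ') {hgx : RingGr 𝒜 x}

theorem scomp_kd (hg : RingGr 𝒜 x) (t : ℕ) (k : ℤ) {i : ℕ} (z : KCochain M n i) :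
    kd x t i (c.scomp k z) = c.scomp (k + (t : ℤ)) (kd x t i z) := by
  funext T
  simp only [kd, scomp]
  rw [← c.compHom_apply, map_sum]
  refine Finset.sum_congr rfl fun s _ => ?_
  rw [map_zsmul, compHom_apply, c.comp_smul _ _ (hg.pow_mem s.1 t), add_sub_cancel_right]

theorem scomp_kpush (hg : RingGr 𝒜 x) (u : ℕ) (k : ℤ) {i : ℕ} (z : KCochain M n i) :
    kpush x u i (c.scomp k z) = c.scomp (k + ((u * i : ℕ) : ℤ)) (kpush x u i z) := by
  funext T
  have hm := hg.prod_mem u T.1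
  rw [T.2] at hm
  show (∏ s ∈ T.1, x s ^ u) • c.comp k (z T) = c.comp (k + ((u * i : ℕ) : ℤ)) ((∏ s ∈ T.1, x s ^ u) • z T)
  rw [c.comp_smul _ _ hm, add_sub_cancel_right]

theorem scomp_strand (t i : ℕ) (j : ℤ) (z : KCochain M n i) :
    kStrand ℳ t i j (c.scomp (j + ((t * i : ℕ) : ℤ)) z) := fun _ => c.comp_mem _ _

theorem scomp_of_strand {t i : ℕ} {j : ℤ} {z : KCochain M n i} (h : kStrand ℳ t i j z) :
    c.scomp (j + ((t * i : ℕ) : ℤ)) z = z := funext fun T => c.comp_of_mem (h T)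

theorem kStrand_kpush (cs : CompSys 𝒜 M ℳ) (hg : RingGr 𝒜 x) (u : ℕ) {t i : ℕ} {j : ℤ}
    {z : KCochain M n i}
    (h : kStrand ℳ t i j z) : kStrand ℳ (t + u) i j (kpush x u i z) := by
  intro T
  have hm := hg.prod_mem u T.1
  rw [T.2] at hm
  have h2 := cs.smul_piece hm (h T)
  have he : ((u * i : ℕ) : ℤ) + (j + ((t * i : ℕ) : ℤ)) = j + (((t + u) * i : ℕ) : ℤ) := by
    push_cast; ring
  rw [he] at h2
  exact h2

theorem scomp_cmap (f : M →ₗ[S] M')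
    (hfc : ∀ (k : ℤ) (m : M), c'.comp k (f m) = f (c.comp k m)) (k : ℤ) {i : ℕ}
    (z : KCochain M n i) : c'.scomp k (cmap f z) = cmap f (c.scomp k z) :=
  funext fun T => hfc k (z T)

end CompSys

end Strand
section Chase
variable {S : Type} [CommRing S] {𝒜 : ℤ → AddSubgroup S}
variable {A : Type} [AddCommGroup A] [Module S A] {ℳA : ℤ → AddSubgroup A}
variable {B : Type} [AddCommGroup B] [Module S B] {ℳB : ℤ → AddSubgroup B}
variable {Cm : Type} [AddCommGroup Cm] [Module S Cm] {ℳC : ℤ → AddSubgroup Cm}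
variable {n : ℕ} {x : Fin n → S}

theorem kd_add (x : Fin n → S) (t i : ℕ) (y z : KCochain A n i) :
    kd x t i (y + z) = kd x t i y + kd x t i z := by
  funext T
  simp only [kd, Pi.add_apply, smul_add]
  exact Finset.sum_add_distrib

theorem kd_sub (x : Fin n → S) (t i : ℕ) (y z : KCochain A n i) :
    kd x t i (y - z) = kd x t i y - kd x t i z := by
  funext T
  simp only [kd, Pi.sub_apply, smul_sub]
  exact Finset.sum_sub_distrib _ _

theorem kpush_add (x : Fin n → S) (u i : ℕ) (y z : KCochain A n i) :
    kpush x u i (y + z) = kpush x u i y + kpush x u i z := by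
  funext T
  simp only [kpush, Pi.add_apply, smul_add]

theorem kpush_zero (x : Fin n → S) (u i : ℕ) :
    kpush x u i (0 : KCochain A n i) = 0 := by
  funext T
  simp only [kpush, Pi.zero_apply, smul_zero]

theorem kIsCobound_succ (x : Fin n → S) (t i : ℕ) (z : KCochain A n (i + 1)) :
    kIsCobound x t (i + 1) z ↔ ∃ w : KCochain A n i, kd x t i w = z := Iff.rfl

theorem kIsCobound_zero (x : Fin n → S) (t : ℕ) (z : KCochain A n 0) :
    kIsCobound x t 0 z ↔ z = 0 := Iff.rfl

theorem lcNZ_vanish {q : ℕ} (hq : n < q) (j : ℤ) : ¬ lcNZ x ℳA q j := by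
  rintro ⟨t, z, hstr, hcyc, hsurv⟩
  obtain ⟨q', rfl⟩ : ∃ q', q = q' + 1 := ⟨q - 1, by omega⟩
  apply hsurv 0
  refine (kIsCobound_succ _ _ _ _).mpr ⟨0, funext fun T => ?_⟩
  exfalso
  have h1 : T.1.card ≤ n := by simpa using Finset.card_le_univ T.1
  have h2 := T.2
  omega

/-- Lemma: for a short exact sequence `0 → A → B → C → 0` of graded modules,
nonvanishing of `H^q(C)` forces `H^q(B) ≠ 0` or `H^{q+1}(A) ≠ 0` (degreewise). -/
theorem chase_L1
    (cA : CompSys 𝒜 A ℳA) (cB : CompSys 𝒜 B ℳB)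
    (hg : RingGr 𝒜 x)
    (f : A →ₗ[S] B) (g : B →ₗ[S] Cm)
    (hfinj : Function.Injective f)
    (hfgr : ∀ (k : ℤ) (a : A), a ∈ ℳA k → f a ∈ ℳB k)
    (hfc : ∀ (k : ℤ) (a : A), cB.comp k (f a) = f (cA.comp k a))
    (hgf : ∀ a, g (f a) = 0)
    (hker : ∀ b, g b = 0 → ∃ a, f a = b)
    (hgsurj : ∀ (k : ℤ) (cc : Cm), cc ∈ ℳC k → ∃ b, b ∈ ℳB k ∧ g b = cc)
    {q : ℕ} {j : ℤ} (h : lcNZ x ℳC q j) :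
    lcNZ x ℳB q j ∨ lcNZ x ℳA (q + 1) j := by
  obtain ⟨t, z, hstr, hcyc, hsurv⟩ := h
  choose w hwmem hwg using fun T => hgsurj (j + ((t * q : ℕ) : ℤ)) (z T) (hstr T)
  have hgw : cmap g w = z := funext fun T => hwg T
  have h0 : cmap g (kd x t q w) = 0 := by rw [← kd_cmap, hgw, hcyc]
  choose v hv using fun T => hker ((kd x t q w) T) (congrFun h0 T)
  have hfv : cmap f v = kd x t q w := funext fun T => hv T
  have hkdwstr : kStrand ℳB t (q + 1) j (kd x t q w) := by
    intro T
    rw [kd_eq]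
    apply AddSubgroup.sum_mem
    intro s hs
    apply AddSubgroup.zsmul_mem
    have hmem : ktot w (T.1.erase s) ∈ ℳB (j + ((t * q : ℕ) : ℤ)) := by
      rw [ktot_apply _ _ (by rw [Finset.card_erase_of_mem hs, T.2]; rfl)]
      exact hwmem _
    have h2 := cB.smul_piece (hg.pow_mem s t) hmem
    have he : ((t : ℕ) : ℤ) + (j + ((t * q : ℕ) : ℤ)) = j + ((t * (q + 1) : ℕ) : ℤ) := by
      push_cast; ring
    rw [he] at h2
    exact h2
  have hvstr : kStrand ℳA t (q + 1) j v := by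
    intro T
    have hb : f (v T) ∈ ℳB (j + ((t * (q + 1) : ℕ) : ℤ)) := by rw [hv T]; exact hkdwstr T
    have h2 := hfc (j + ((t * (q + 1) : ℕ) : ℤ)) (v T)
    rw [cB.comp_of_mem hb] at h2
    have h3 : v T = cA.comp (j + ((t * (q + 1) : ℕ) : ℤ)) (v T) := hfinj h2
    rw [h3]
    exact cA.comp_mem _ _
  have hvcyc : kd x t (q + 1) v = 0 := by
    funext T
    apply hfinj
    calc f ((kd x t (q + 1) v) T) = (cmap f (kd x t (q + 1) v)) T := rfl
      _ = (kd x t (q + 1) (cmap f v)) T := by rw [kd_cmap]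
      _ = (kd x t (q + 1) (kd x t q w)) T := by rw [hfv]
      _ = 0 := by rw [kd_kd]; rfl
      _ = f 0 := f.map_zero.symm
  by_cases hA : lcNZ x ℳA (q + 1) j
  · exact Or.inr hA
  left
  have hvnot : ∃ u, kIsCobound x (t + u) (q + 1) (kpush x u (q + 1) v) := by
    by_contra hcon
    push_neg at hcon
    exact hA ⟨t, v, hvstr, hvcyc, hcon⟩
  obtain ⟨u, hcb⟩ := hvnot
  obtain ⟨a0, ha0⟩ := (kIsCobound_succ _ _ _ _).mp hcb
  set d : ℤ := j + (((t + u) * q : ℕ) : ℤ) with hd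
  set a : KCochain A n q := cA.scomp d a0 with ha
  have hkda : kd x (t + u) q a = kpush x u (q + 1) v := by
    have hidx : d + ((t + u : ℕ) : ℤ) = j + (((t + u) * (q + 1) : ℕ) : ℤ) := by
      rw [hd]; push_cast; ring
    rw [ha, cA.scomp_kd hg, ha0, hidx,
      cA.scomp_of_strand (CompSys.kStrand_kpush cA hg u hvstr)]
  set w' : KCochain B n q := kpush x u q w - cmap f a with hw'
  refine ⟨t + u, w', ?_, ?_, ?_⟩
  · intro T
    have h1 : (kpush x u q w) T ∈ ℳB (j + (((t + u) * q : ℕ) : ℤ)) :=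
      CompSys.kStrand_kpush cB hg u (fun T => hwmem T) T
    have h2 : (cmap f a) T ∈ ℳB (j + (((t + u) * q : ℕ) : ℤ)) :=
      hfgr _ _ (cA.comp_mem _ _)
    exact AddSubgroup.sub_mem _ h1 h2
  · rw [hw', kd_sub, kd_kpush, ← hfv, kpush_cmap, kd_cmap, hkda, sub_self]
  · intro u' hcb'
    have hgw' : cmap g w' = kpush x u q z := by
      funext T
      show g ((kpush x u q w) T - f (a T)) = (kpush x u q z) T
      rw [map_sub, hgf (a T), sub_zero, kpush_apply, map_smul, hwg T, kpush_apply]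
    cases q with
    | zero =>
        rw [kIsCobound_zero] at hcb'
        apply hsurv (u + u')
        rw [← Nat.add_assoc] at *
        rw [kIsCobound_zero, ← kpush_kpush, ← hgw', kpush_cmap, hcb', cmap_zero]
    | succ q'' =>
        obtain ⟨b, hb⟩ := (kIsCobound_succ _ _ _ _).mp hcb'
        apply hsurv (u + u')
        rw [← Nat.add_assoc]
        refine (kIsCobound_succ _ _ _ _).mpr ⟨cmap g b, ?_⟩
        rw [kd_cmap, hb, ← kpush_cmap, hgw', kpush_kpush]

/-- Lemma: for a short exact sequence `0 → A → B → C → 0` of graded modules,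
nonvanishing of `H^q(B)` forces `H^q(A) ≠ 0` or `H^q(C) ≠ 0` (degreewise), `q ≥ 1`. -/
theorem chase_L3
    (cA : CompSys 𝒜 A ℳA) (cB : CompSys 𝒜 B ℳB)
    (hg : RingGr 𝒜 x)
    (f : A →ₗ[S] B) (g : B →ₗ[S] Cm)
    (hfinj : Function.Injective f)
    (hfc : ∀ (k : ℤ) (a : A), cB.comp k (f a) = f (cA.comp k a))
    (hker : ∀ b, g b = 0 → ∃ a, f a = b)
    (hgsurj : ∀ cc : Cm, ∃ b, g b = cc)
    (hggr : ∀ (k : ℤ) (b : B), b ∈ ℳB k → g b ∈ ℳC k)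
    {q' : ℕ} {j : ℤ} (h : lcNZ x ℳB (q' + 1) j) :
    lcNZ x ℳA (q' + 1) j ∨ lcNZ x ℳC (q' + 1) j := by
  by_cases hC : lcNZ x ℳC (q' + 1) j
  · exact Or.inr hC
  by_cases hA : lcNZ x ℳA (q' + 1) j
  · exact Or.inl hA
  exfalso
  obtain ⟨t, z, hstr, hcyc, hsurv⟩ := h
  have hgzstr : kStrand ℳC t (q' + 1) j (cmap g z) := fun T => hggr _ _ (hstr T)
  have hgzcyc : kd x t (q' + 1) (cmap g z) = 0 := by rw [kd_cmap, hcyc, cmap_zero]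
  have hex : ∃ u, kIsCobound x (t + u) (q' + 1) (kpush x u (q' + 1) (cmap g z)) := by
    by_contra hcon
    push_neg at hcon
    exact hC ⟨t, _, hgzstr, hgzcyc, hcon⟩
  obtain ⟨u, hcbC⟩ := hex
  obtain ⟨cc, hcc⟩ := (kIsCobound_succ _ _ _ _).mp hcbC
  choose b hbg using fun T => hgsurj (cc T)
  have hgb : cmap g b = cc := funext fun T => hbg T
  set y : KCochain B n (q' + 1) := kpush x u (q' + 1) z - kd x (t + u) q' b with hy
  have hgy : cmap g y = 0 := by
    rw [hy, cmap_sub, ← kpush_cmap, ← kd_cmap, hgb, hcc, sub_self]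
  choose v hfvv using fun T => hker (y T) (congrFun hgy T)
  have hfv : cmap f v = y := funext fun T => hfvv T
  have hkdy : kd x (t + u) (q' + 1) y = 0 := by
    rw [hy, kd_sub, kd_kpush, hcyc, kpush_zero, kd_kd, sub_self]
  have hvcyc : kd x (t + u) (q' + 1) v = 0 := by
    funext T
    apply hfinj
    calc f ((kd x (t + u) (q' + 1) v) T) = (cmap f (kd x (t + u) (q' + 1) v)) T := rfl
      _ = (kd x (t + u) (q' + 1) (cmap f v)) T := by rw [kd_cmap]
      _ = 0 := by rw [hfv, hkdy]; rfl
      _ = f 0 := f.map_zero.symm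
  set d' : ℤ := j + (((t + u) * (q' + 1) : ℕ) : ℤ) with hd'
  set vj : KCochain A n (q' + 1) := cA.scomp d' v with hvj
  have hvjstr : kStrand ℳA (t + u) (q' + 1) j vj := cA.scomp_strand _ _ _ _
  have hvjcyc : kd x (t + u) (q' + 1) vj = 0 := by
    rw [hvj, cA.scomp_kd hg, hvcyc, cA.scomp_zero]
  have hex2 : ∃ u', kIsCobound x (t + u + u') (q' + 1) (kpush x u' (q' + 1) vj) := by
    by_contra hcon
    push_neg at hcon
    exact hA ⟨t + u, vj, hvjstr, hvjcyc, hcon⟩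
  obtain ⟨u', hcbA⟩ := hex2
  obtain ⟨a, ha⟩ := (kIsCobound_succ _ _ _ _).mp hcbA
  set tt : ℕ := t + u + u' with htt
  set d'' : ℤ := j + ((tt * (q' + 1) : ℕ) : ℤ) with hd''
  apply hsurv (u + u')
  rw [← Nat.add_assoc]
  refine (kIsCobound_succ _ _ _ _).mpr
    ⟨cmap f a + cB.scomp (d'' - (tt : ℤ)) (kpush x u' q' b), ?_⟩
  have key : kpush x (u + u') (q' + 1) z =
      cmap f (kpush x u' (q' + 1) v) + kd x tt q' (kpush x u' q' b) := by
    have h1 : kpush x u (q' + 1) z = y + kd x (t + u) q' b := by rw [hy, sub_add_cancel]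
    rw [← kpush_kpush, h1, kpush_add, ← hfv, kpush_cmap, ← kd_kpush, ← htt]
  -- apply the degree-`j` strand extraction to both sides of `key`
  have hlhs : cB.scomp d'' (kpush x (u + u') (q' + 1) z) = kpush x (u + u') (q' + 1) z := by
    have hstr2 : kStrand ℳB (t + (u + u')) (q' + 1) j (kpush x (u + u') (q' + 1) z) :=
      CompSys.kStrand_kpush cB hg (u + u') hstr
    rw [← Nat.add_assoc] at hstr2
    exact cB.scomp_of_strand hstr2
  have hterm1 : cB.scomp d'' (cmap f (kpush x u' (q' + 1) v)) = cmap f (kd x tt q' a) := by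
    rw [CompSys.scomp_cmap cA cB f hfc]
    congr 1
    have hidx : d' + ((u' * (q' + 1) : ℕ) : ℤ) = d'' := by rw [hd', hd'', htt]; push_cast; ring
    rw [← hidx, ← cA.scomp_kpush hg, ← hvj, ha]
  have hterm2 : kd x tt q' (cB.scomp (d'' - (tt : ℤ)) (kpush x u' q' b)) =
      cB.scomp d'' (kd x tt q' (kpush x u' q' b)) := by
    rw [cB.scomp_kd hg, sub_add_cancel]
  calc kd x tt q' (cmap f a + cB.scomp (d'' - (tt : ℤ)) (kpush x u' q' b))
      = kd x tt q' (cmap f a) + kd x tt q' (cB.scomp (d'' - (tt : ℤ)) (kpush x u' q' b)) :=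
        kd_add _ _ _ _ _
    _ = cmap f (kd x tt q' a) + cB.scomp d'' (kd x tt q' (kpush x u' q' b)) := by
        rw [kd_cmap, hterm2]
    _ = cB.scomp d'' (cmap f (kpush x u' (q' + 1) v)) +
        cB.scomp d'' (kd x tt q' (kpush x u' q' b)) := by rw [hterm1]
    _ = cB.scomp d'' (kpush x (u + u') (q' + 1) z) := by rw [← cB.scomp_add, ← key]
    _ = kpush x (u + u') (q' + 1) z := hlhs

end Chase
section Concrete
variable {S : Type} [CommRing S] {𝒜 : ℤ → AddSubgroup S}
variable {M : Type} [AddCommGroup M] [Module S M] {ℳ : ℤ → AddSubgroup M}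
variable {M' : Type} [AddCommGroup M'] [Module S M'] {ℳ' : ℤ → AddSubgroup M'}

/-- Graded component extraction from an internal grading. -/
noncomputable def gcomp (hM : IsGradedMod 𝒜 ℳ) (k : ℤ) (m : M) : M :=
  letI := hM.internal.chooseDecomposition
  ((DirectSum.decompose ℳ m) k : M)

theorem gcomp_add (hM : IsGradedMod 𝒜 ℳ) (k : ℤ) (a b : M) :
    gcomp hM k (a + b) = gcomp hM k a + gcomp hM k b := by
  letI := hM.internal.chooseDecomposition
  show ((DirectSum.decompose ℳ (a + b)) k : M) =
    ((DirectSum.decompose ℳ a) k : M) + ((DirectSum.decompose ℳ b) k : M)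
  rw [DirectSum.decompose_add, DirectSum.add_apply, AddSubgroup.coe_add]

theorem gcomp_mem (hM : IsGradedMod 𝒜 ℳ) (k : ℤ) (m : M) : gcomp hM k m ∈ ℳ k := by
  letI := hM.internal.chooseDecomposition
  exact ((DirectSum.decompose ℳ m) k).2

theorem gcomp_of_mem_same (hM : IsGradedMod 𝒜 ℳ) {k : ℤ} {m : M} (hm : m ∈ ℳ k) :
    gcomp hM k m = m := by
  letI := hM.internal.chooseDecomposition
  exact DirectSum.decompose_of_mem_same ℳ hm

theorem gcomp_of_mem_ne (hM : IsGradedMod 𝒜 ℳ) {k l : ℤ} {m : M} (hm : m ∈ ℳ l) (h : l ≠ k) :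
    gcomp hM k m = 0 := by
  letI := hM.internal.chooseDecomposition
  exact DirectSum.decompose_of_mem_ne ℳ hm h

theorem gcomp_induction (hM : IsGradedMod 𝒜 ℳ) {p : M → Prop} (h0 : p 0)
    (hhom : ∀ (l : ℤ) (m : M), m ∈ ℳ l → p m)
    (hadd : ∀ a b : M, p a → p b → p (a + b)) : ∀ m, p m := by
  letI := hM.internal.chooseDecomposition
  exact DirectSum.Decomposition.inductionOn ℳ h0 (fun {i} m => hhom i m.1 m.2) hadd

theorem gcomp_zero (hM : IsGradedMod 𝒜 ℳ) (k : ℤ) : gcomp hM k (0 : M) = 0 :=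
  gcomp_of_mem_same hM (zero_mem _)

theorem gcomp_smul (hM : IsGradedMod 𝒜 ℳ) {d : ℤ} {s : S} (hs : s ∈ 𝒜 d) (k : ℤ) (m : M) :
    gcomp hM k (s • m) = s • gcomp hM (k - d) m := by
  revert m
  refine gcomp_induction hM ?_ ?_ ?_
  · rw [smul_zero, gcomp_zero, gcomp_zero, smul_zero]
  · intro l m hm
    have h1 : s • m ∈ ℳ (d + l) := hM.smul_mem hs hm
    by_cases hk : k = d + l
    · subst hk
      rw [gcomp_of_mem_same hM h1, show d + l - d = l by ring, gcomp_of_mem_same hM hm]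
    · rw [gcomp_of_mem_ne hM h1 (fun h => hk h.symm),
        gcomp_of_mem_ne hM hm (fun h => hk (by omega)), smul_zero]
  · intro a b ha hb
    rw [smul_add, gcomp_add, gcomp_add, ha, hb, smul_add]

theorem gcomp_map (hM : IsGradedMod 𝒜 ℳ) (hM' : IsGradedMod 𝒜 ℳ') (f : M →ₗ[S] M')
    (hf : ∀ (l : ℤ) (m : M), m ∈ ℳ l → f m ∈ ℳ' l) (k : ℤ) (m : M) :
    gcomp hM' k (f m) = f (gcomp hM k m) := by
  revert m
  refine gcomp_induction hM ?_ ?_ ?_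
  · rw [map_zero, gcomp_zero, gcomp_zero, map_zero]
  · intro l m hm
    by_cases hk : k = l
    · subst hk
      rw [gcomp_of_mem_same hM' (hf _ _ hm), gcomp_of_mem_same hM hm]
    · rw [gcomp_of_mem_ne hM' (hf _ _ hm) (Ne.symm hk), gcomp_of_mem_ne hM hm (Ne.symm hk),
        map_zero]
  · intro a b ha hb
    rw [map_add, gcomp_add, gcomp_add, ha, hb, map_add]

/-- The component system of an internally graded module. -/
noncomputable def gradedCompSys (hM : IsGradedMod 𝒜 ℳ) : CompSys 𝒜 M ℳ where
  comp := gcomp hM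
  comp_add := gcomp_add hM
  comp_mem := gcomp_mem hM
  comp_of_mem := gcomp_of_mem_same hM
  comp_smul := fun k m hs => gcomp_smul hM hs k m
  smul_piece := fun hs hm => hM.smul_mem hs hm

/-- The component system of a graded submodule. -/
noncomputable def subCompSys (c : CompSys 𝒜 M ℳ) (P : Submodule S M)
    (hP : ∀ m ∈ P, ∀ k, c.comp k m ∈ P) :
    CompSys 𝒜 (↥P) (fun k => AddSubgroup.comap P.subtype.toAddMonoidHom (ℳ k)) where
  comp k m := ⟨c.comp k m.1, hP m.1 m.2 k⟩
  comp_add k a b := Subtype.ext (by simp [c.comp_add])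
  comp_mem k m := by
    simp only [AddSubgroup.mem_comap]
    exact c.comp_mem k m.1
  comp_of_mem {k m} h := Subtype.ext (c.comp_of_mem (by simpa using h))
  comp_smul {d s} k m hs := Subtype.ext (by
    show c.comp k ((s • m : ↥P) : M) = s • c.comp (k - d) m.1
    rw [Submodule.coe_smul]
    exact c.comp_smul k m.1 hs)
  smul_piece {d i s m} hs hm := by
    simp only [AddSubgroup.mem_comap] at hm ⊢
    have h2 := c.smul_piece hs hm
    simpa using h2

theorem subCompSys_comp_coe (c : CompSys 𝒜 M ℳ) (P : Submodule S M)
    (hP : ∀ m ∈ P, ∀ k, c.comp k m ∈ P) (k : ℤ) (m : ↥P) :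
    ((subCompSys c P hP).comp k m : M) = c.comp k m.1 := rfl

/-- The component system of the quotient by a graded submodule. -/
noncomputable def quotCompSys (c : CompSys 𝒜 M ℳ) (P : Submodule S M)
    (hP : ∀ m ∈ P, ∀ k, c.comp k m ∈ P) :
    CompSys 𝒜 (M ⧸ P) (fun k => AddSubgroup.map P.mkQ.toAddMonoidHom (ℳ k)) where
  comp k := Quotient.map' (c.comp k) (fun a b hab => by
    rw [Submodule.quotientRel_def] at hab ⊢
    have h1 : c.comp k a - c.comp k b = c.comp k (a - b) := by
      have := c.comp_add k (a - b) b
      rw [sub_add_cancel] at this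
      rw [this, add_sub_cancel_right]
    rw [h1]
    exact hP _ hab k)
  comp_add k a b := by
    obtain ⟨a, rfl⟩ := Submodule.Quotient.mk_surjective P a
    obtain ⟨b, rfl⟩ := Submodule.Quotient.mk_surjective P b
    show Quotient.map' _ _ (Submodule.Quotient.mk a + Submodule.Quotient.mk b) = _
    rw [← Submodule.Quotient.mk_add]
    show Submodule.Quotient.mk (c.comp k (a + b)) =
      Submodule.Quotient.mk (c.comp k a) + Submodule.Quotient.mk (c.comp k b)
    rw [c.comp_add, Submodule.Quotient.mk_add]
  comp_mem k m := by
    obtain ⟨m, rfl⟩ := Submodule.Quotient.mk_surjective P m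
    exact ⟨c.comp k m, c.comp_mem k m, rfl⟩
  comp_of_mem {k m} h := by
    obtain ⟨b, hb, rfl⟩ := h
    show Submodule.Quotient.mk (c.comp k b) = _
    rw [c.comp_of_mem hb]
    rfl
  comp_smul {d s} k m hs := by
    obtain ⟨m, rfl⟩ := Submodule.Quotient.mk_surjective P m
    rw [← Submodule.Quotient.mk_smul]
    show Submodule.Quotient.mk (c.comp k (s • m)) = s • Submodule.Quotient.mk (c.comp (k - d) m)
    rw [c.comp_smul k m hs, Submodule.Quotient.mk_smul]
  smul_piece {d i s m} hs hm := by
    obtain ⟨b, hb, rfl⟩ := hm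
    refine ⟨s • b, c.smul_piece hs hb, ?_⟩
    show Submodule.Quotient.mk (s • b) = s • Submodule.Quotient.mk b
    rw [Submodule.Quotient.mk_smul]

theorem quotCompSys_comp_mk (c : CompSys 𝒜 M ℳ) (P : Submodule S M)
    (hP : ∀ m ∈ P, ∀ k, c.comp k m ∈ P) (k : ℤ) (m : M) :
    (quotCompSys c P hP).comp k (Submodule.Quotient.mk m) =
      Submodule.Quotient.mk (c.comp k m) := rfl

variable {n : ℕ} {x : Fin n → S}

/-- Transfer of local-cohomology nonvanishing along a graded isomorphism. -/
theorem lcNZ_transfer (e : M →ₗ[S] M') (hinj : Function.Injective e)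
    (hsurj : Function.Surjective e)
    (hgr : ∀ (k : ℤ) (m : M), m ∈ ℳ k → e m ∈ ℳ' k) {q : ℕ} {j : ℤ}
    (h : lcNZ x ℳ q j) : lcNZ x ℳ' q j := by
  obtain ⟨t, z, hstr, hcyc, hsurv⟩ := h
  refine ⟨t, cmap e z, fun T => hgr _ _ (hstr T), by rw [kd_cmap, hcyc, cmap_zero], ?_⟩
  intro u hcb
  apply hsurv u
  cases q with
  | zero =>
      rw [kIsCobound_zero] at hcb ⊢
      rw [kpush_cmap] at hcb
      funext T
      apply hinj
      calc e ((kpush x u 0 z) T) = (cmap e (kpush x u 0 z)) T := rfl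
        _ = 0 := by rw [hcb]; rfl
        _ = e 0 := e.map_zero.symm
  | succ q'' =>
      obtain ⟨w, hw⟩ := (kIsCobound_succ _ _ _ _).mp hcb
      choose w' hw' using fun T => hsurj (w T)
      have hcw : cmap e w' = w := funext fun T => hw' T
      refine (kIsCobound_succ _ _ _ _).mpr ⟨w', funext fun T => ?_⟩
      apply hinj
      calc e ((kd x (t + u) q'' w') T) = (cmap e (kd x (t + u) q'' w')) T := rfl
        _ = (kd x (t + u) q'' (cmap e w')) T := by rw [kd_cmap]
        _ = (kpush x u (q'' + 1) (cmap e z)) T := by rw [hcw, hw]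
        _ = (cmap e (kpush x u (q'' + 1) z)) T := by rw [kpush_cmap]
        _ = e ((kpush x u (q'' + 1) z) T) := rfl

end Concrete
section Poly
variable {R₀ : Type} [CommRing R₀] {N : ℕ}

theorem mem_polyGrading_nonneg {a : ℤ} (ha : 0 ≤ a) {r : MvPolynomial (Fin N) R₀} :
    r ∈ polyGrading R₀ N a ↔ MvPolynomial.IsHomogeneous r a.toNat := by
  rw [polyGrading]
  simp only [if_pos ha, Submodule.mem_toAddSubgroup, MvPolynomial.mem_homogeneousSubmodule]

theorem mem_polyGrading_neg {a : ℤ} (ha : ¬ 0 ≤ a) {r : MvPolynomial (Fin N) R₀} :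
    r ∈ polyGrading R₀ N a ↔ r = 0 := by
  rw [polyGrading]
  simp only [if_neg ha, AddSubgroup.mem_bot]

theorem polyGrading_ringGr (R₀ : Type) [CommRing R₀] (N : ℕ) :
    RingGr (polyGrading R₀ N) (MvPolynomial.X : Fin N → MvPolynomial (Fin N) R₀) := by
  refine ⟨?_, ?_, ?_⟩
  · rw [mem_polyGrading_nonneg le_rfl]
    exact MvPolynomial.isHomogeneous_one _ _
  · intro a b r r' hr hr'
    by_cases ha : 0 ≤ a
    · by_cases hb : 0 ≤ b
      · rw [mem_polyGrading_nonneg ha] at hr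
        rw [mem_polyGrading_nonneg hb] at hr'
        rw [mem_polyGrading_nonneg (by omega)]
        have he : (a + b).toNat = a.toNat + b.toNat := by omega
        rw [he]
        exact hr.mul hr'
      · rw [mem_polyGrading_neg hb] at hr'
        rw [hr', mul_zero]
        exact zero_mem _
    · rw [mem_polyGrading_neg ha] at hr
      rw [hr, zero_mul]
      exact zero_mem _
  · intro s
    rw [mem_polyGrading_nonneg (by omega)]
    exact MvPolynomial.isHomogeneous_X _ _

end Poly

end Lem35

set_option maxHeartbeats 2000000
set_option synthInstance.maxHeartbeats 1000000

/-- **Local cohomology of the zeroth homology of a non-acyclic complex** (Lemma 3.2 /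
Lemma 3.5, first part).  Let `R = R₀[X_1, …, X_N]` be a standard graded polynomial ring over
a commutative Noetherian ring `R₀` and `D_•` a bounded-below graded complex of finitely
generated graded `R`-modules.  If every higher homology module `H_i(D_•)`, `i > 0`, has
cohomological dimension at most `1` with respect to `R₊`, then for every `p ≥ 0`,
`a_p(H_0(D_•)) ≤ max_{i ≥ 0} a_{p+i}(D_i)`, expressed elementwise: every degree in which
`H^p_{R₊}(H_0)` is nonzero is bounded by a degree in which some `H^{p+i}_{R₊}(D_i)` is
nonzero. -/
theorem a_of_H0_le_of_small_higher_homology (R₀ : Type) [CommRing R₀] [IsNoetherianRing R₀]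
    (N : ℕ) (C : ℕ → Type) [∀ i, AddCommGroup (C i)]
    [∀ i, Module (MvPolynomial (Fin N) R₀) (C i)]
    [∀ i, Module.Finite (MvPolynomial (Fin N) R₀) (C i)]
    (D : GradedComplexOn (polyGrading R₀ N) C)
    (hcd : ∀ i : ℕ, 0 < i → ∀ q : ℕ, 2 ≤ q → ∀ j : ℤ,
      ¬ lcNZ (MvPolynomial.X : Fin N → MvPolynomial (Fin N) R₀) (D.Hpiece i) q j) :
    ∀ (p : ℕ) (j : ℤ),
      lcNZ (MvPolynomial.X : Fin N → MvPolynomial (Fin N) R₀) (D.Hpiece 0) p j →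
      ∃ (i : ℕ) (j' : ℤ),
        lcNZ (MvPolynomial.X : Fin N → MvPolynomial (Fin N) R₀) (D.piece i) (p + i) j' ∧
        j ≤ j' := by
  classical
  intro p j hp
  have hg : Lem35.RingGr (polyGrading R₀ N) (MvPolynomial.X : Fin N → MvPolynomial (Fin N) R₀) :=
    Lem35.polyGrading_ringGr R₀ N
  -- ambient component systems
  let cC : ∀ i, Lem35.CompSys (polyGrading R₀ N) (C i) (D.piece i) := fun i => Lem35.gradedCompSys (D.graded i)
  have hdelta : ∀ i (k : ℤ) (m : C (i + 1)),
      (cC i).comp k (D.δ i m) = D.δ i ((cC (i + 1)).comp k m) := fun i k m =>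
    Lem35.gcomp_map (D.graded (i + 1)) (D.graded i) (D.δ i)
      (fun l m hm => D.δ_graded i l m hm) k m
  have hBgr : ∀ i, ∀ m ∈ D.bdry i, ∀ k, (cC i).comp k m ∈ D.bdry i := by
    intro i m hm k
    obtain ⟨z, rfl⟩ := hm
    rw [hdelta i k z]
    exact ⟨_, rfl⟩
  have hZgr : ∀ i, ∀ m ∈ D.cyc i, ∀ k, (cC i).comp k m ∈ D.cyc i := by
    intro i m hm k
    cases i with
    | zero => trivial
    | succ i' =>
        have hm' : D.δ i' m = 0 := hm
        show (cC (i' + 1)).comp k m ∈ LinearMap.ker (D.δ i')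
        rw [LinearMap.mem_ker, ← hdelta i' k m, hm']
        exact (cC i').comp_zero k
  let cZ : ∀ i, Lem35.CompSys (polyGrading R₀ N) ↥(D.cyc i)
      (fun k => AddSubgroup.comap (D.cyc i).subtype.toAddMonoidHom (D.piece i k)) :=
    fun i => Lem35.subCompSys (cC i) (D.cyc i) (hZgr i)
  let cBd : ∀ i, Lem35.CompSys (polyGrading R₀ N) ↥(D.bdry i)
      (fun k => AddSubgroup.comap (D.bdry i).subtype.toAddMonoidHom (D.piece i k)) :=
    fun i => Lem35.subCompSys (cC i) (D.bdry i) (hBgr i)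
  let K : ∀ i, Submodule (MvPolynomial (Fin N) R₀) ↥(D.cyc i) := fun i => Submodule.comap (D.cyc i).subtype (D.bdry i)
  have hKgr : ∀ i, ∀ m ∈ K i, ∀ k, (cZ i).comp k m ∈ K i := by
    intro i m hm k
    show ((cZ i).comp k m : C i) ∈ D.bdry i
    exact hBgr i m.1 hm k
  let cK : ∀ i, Lem35.CompSys (polyGrading R₀ N) ↥(K i)
      (fun k => AddSubgroup.comap (K i).subtype.toAddMonoidHom
        (AddSubgroup.comap (D.cyc i).subtype.toAddMonoidHom (D.piece i k))) :=
    fun i => Lem35.subCompSys (cZ i) (K i) (hKgr i)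
  let cH : ∀ i, Lem35.CompSys (polyGrading R₀ N) (D.H i) (D.Hpiece i) :=
    fun i => Lem35.quotCompSys (cZ i) (K i) (hKgr i)
  have hBZ : ∀ i, D.bdry i ≤ D.cyc i := by
    intro i
    rintro m ⟨z, rfl⟩
    cases i with
    | zero => trivial
    | succ i' => exact LinearMap.mem_ker.mpr (D.δδ i' z)
  -- data for the short exact sequence K i → Z i → H i
  have hgfKH : ∀ i (a : ↥(K i)), (K i).mkQ ((K i).subtype a) = 0 := by
    intro i a
    rw [Submodule.mkQ_apply]
    exact (Submodule.Quotient.mk_eq_zero _).mpr a.2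
  have hkerKH : ∀ i (b : ↥(D.cyc i)), (K i).mkQ b = 0 → ∃ a, (K i).subtype a = b := by
    intro i b hb
    rw [Submodule.mkQ_apply] at hb
    exact ⟨⟨b, (Submodule.Quotient.mk_eq_zero _).mp hb⟩, rfl⟩
  have hgsurjKH : ∀ i (k : ℤ) (cc : D.H i), cc ∈ D.Hpiece i k →
      ∃ b, b ∈ AddSubgroup.comap (D.cyc i).subtype.toAddMonoidHom (D.piece i k) ∧
        (K i).mkQ b = cc := by
    intro i k cc hcc
    obtain ⟨b, hb, hbeq⟩ := hcc
    exact ⟨b, hb, hbeq⟩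
  -- data for the short exact sequence Z (i+1) → C (i+1) → B i
  have hgfZB : ∀ i (a : ↥(D.cyc (i + 1))),
      (D.δ i).rangeRestrict ((D.cyc (i + 1)).subtype a) = 0 := by
    intro i a
    apply Subtype.ext
    show D.δ i a.1 = 0
    exact a.2
  have hkerZB : ∀ i (b : C (i + 1)), (D.δ i).rangeRestrict b = 0 →
      ∃ a, (D.cyc (i + 1)).subtype a = b := by
    intro i b hb
    have hb' : D.δ i b = 0 := congrArg Subtype.val hb
    exact ⟨⟨b, LinearMap.mem_ker.mpr hb'⟩, rfl⟩
  have hgsurjZB : ∀ i (k : ℤ) (cc : ↥(D.bdry i)),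
      cc ∈ AddSubgroup.comap (D.bdry i).subtype.toAddMonoidHom (D.piece i k) →
      ∃ b, b ∈ D.piece (i + 1) k ∧ (D.δ i).rangeRestrict b = cc := by
    intro i k cc hcc
    have hc1 : (cc : C i) ∈ D.piece i k := hcc
    obtain ⟨m, hm⟩ := cc.2
    refine ⟨(cC (i + 1)).comp k m, (cC (i + 1)).comp_mem k m, ?_⟩
    apply Subtype.ext
    show D.δ i ((cC (i + 1)).comp k m) = (cc : C i)
    rw [← hdelta i k m, hm]
    exact (cC i).comp_of_mem hc1
  -- transfer from K i to B i
  have htransKB : ∀ i {q : ℕ},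
      lcNZ (MvPolynomial.X : Fin N → MvPolynomial (Fin N) R₀) (fun k => AddSubgroup.comap (K i).subtype.toAddMonoidHom
        (AddSubgroup.comap (D.cyc i).subtype.toAddMonoidHom (D.piece i k))) q j →
      lcNZ (MvPolynomial.X : Fin N → MvPolynomial (Fin N) R₀) (fun k => AddSubgroup.comap (D.bdry i).subtype.toAddMonoidHom (D.piece i k)) q j := by
    intro i q h
    refine Lem35.lcNZ_transfer
      (LinearMap.codRestrict (D.bdry i) (((D.cyc i).subtype).comp (K i).subtype)
        (fun m => m.2)) ?_ ?_ ?_ h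
    · intro a b hab
      have h1 := congrArg Subtype.val hab
      exact Subtype.ext (Subtype.ext h1)
    · rintro ⟨c, hc⟩
      exact ⟨⟨⟨c, hBZ i hc⟩, hc⟩, rfl⟩
    · intro k m hm
      exact hm
  -- the main descending chase
  have main : ∀ (fuel i q : ℕ), q = p + i + 1 → N + 1 ≤ q + fuel →
      lcNZ (MvPolynomial.X : Fin N → MvPolynomial (Fin N) R₀) (fun k => AddSubgroup.comap (D.bdry i).subtype.toAddMonoidHom (D.piece i k)) q j →
      ∃ (i' : ℕ) (j' : ℤ), lcNZ (MvPolynomial.X : Fin N → MvPolynomial (Fin N) R₀) (D.piece i') (p + i') j' ∧ j ≤ j' := by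
    intro fuel
    induction fuel with
    | zero =>
        intro i q hq hN h
        exact absurd h (Lem35.lcNZ_vanish (by omega) j)
    | succ fuel ih =>
        intro i q hq hN h
        subst hq
        rcases Lem35.chase_L1 (cZ (i + 1)) (cC (i + 1)) hg ((D.cyc (i + 1)).subtype)
          ((D.δ i).rangeRestrict) (Submodule.injective_subtype _)
          (fun k a ha => ha) (fun k a => rfl) (hgfZB i) (hkerZB i) (hgsurjZB i) h with h1 | h1
        · exact ⟨i + 1, j, h1, le_refl j⟩
        · rcases Lem35.chase_L3 (ℳC := D.Hpiece (i + 1)) (cK (i + 1)) (cZ (i + 1)) hg ((K (i + 1)).subtype)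
            ((K (i + 1)).mkQ) (Submodule.injective_subtype _) (fun k a => rfl)
            (hkerKH (i + 1)) (Submodule.mkQ_surjective _) (fun k b hb => ⟨b, hb, rfl⟩)
            h1 with h2 | h2
          · exact ih (i + 1) (p + i + 1 + 1) (by omega) (by omega) (htransKB (i + 1) h2)
          · exact absurd h2 (hcd (i + 1) (Nat.succ_pos i) (p + i + 1 + 1) (by omega) j)
  -- start of the chase: the sequence K 0 → Z 0 → H 0
  rcases Lem35.chase_L1 (cK 0) (cZ 0) hg ((K 0).subtype) ((K 0).mkQ)
    (Submodule.injective_subtype _) (fun k a ha => ha) (fun k a => rfl) (hgfKH 0)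
    (hkerKH 0) (hgsurjKH 0) hp with h1 | h1
  · refine ⟨0, j, ?_, le_refl j⟩
    exact Lem35.lcNZ_transfer ((D.cyc 0).subtype) (Submodule.injective_subtype _)
      (fun c => ⟨⟨c, trivial⟩, rfl⟩) (fun k m hm => hm) h1
  · exact main (N + 1) 0 (p + 1) (by omega) (by omega) (htransKB 0 h1)
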